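/- Let M be an 𝔏-module with IM ≠ 0, where I = 𝔤 ⊗ A, and let M̂ ⊆ Hom(A, M) be the span of the maps μ(x, u) : a ↦ (ax)u for x ∈ I, u ∈ M. Then the formulas l·μ(x,u) = μ([l,x],u) + (−1)^{|l||x|} μ(x, lu) (for homogeneous l ∈ 𝔏) and a·μ(x,u) = μ(ax, u) (for a ∈ A) make M̂ a well-defined A𝔏-module, and π : M̂ → M, μ(x,u) ↦ xu, is a surjective 𝔏-module homomorphism onto IM. -/

import Mathlib

/-!
STATEMENT 13: Let `M` be an `𝔏`-module with `IM ≠ 0` (`I = 𝔤 ⊗ A`), and let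
`M̂ ⊆ Hom(A, M)` be the span of the maps `μ(x, u) : a ↦ (ax)u`.  Then the
formulas `l·μ(x,u) = μ([l,x],u) + μ(x, lu)` and `a·μ(x,u) = μ(ax,u)` make
`M̂` a well-defined `A𝔏`-module, and `π : M̂ → M`, `μ(x,u) ↦ xu` (evaluation
at `t^0 = 1`) is a surjective `𝔏`-module homomorphism onto `IM`.

Model: `Hom(A, M)` is identified with `ℤ → M` (values on the basis `t^r`);
the `𝔏`-module `M` is given by operators `ρd i`, `ρx s j` with the defining
relations; `μ(x_s(j), u)` is the function `r ↦ ρx s (j+r) u`, and `M̂` their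
span.  The actions (which extend the stated formulas on the `μ(x,u)`) are
`(d_i·h)(r) = d_i(h(t^r)) − h(d_i t^r) = ρd i (h r) − r·h(i+r)`,
`(x_s(k)·h)(r) = ρx s k (h r)`, `(t^k·h)(r) = h(t^r t^k) = h(r+k)`, and the
theorem asserts that `M̂` is stable under them, that on `M̂` they satisfy the
`𝔏̃`-module relations with `A` acting associatively and unitally, that the
stated formulas for the action on the spanning vectors `μ(x_s(j),u)` hold,
and that evaluation at `0` intertwines the actions and maps `M̂` onto `IM`.
-/

variable {S : Type*} {M : Type*} [AddCommGroup M] [Module ℂ M]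

/-- `μ(x_s(j), u) ∈ Hom(A, M)`: the map `t^r ↦ (t^r x_s(j)) u`. -/
noncomputable def mu (ρx : S → ℤ → Module.End ℂ M) (s : S) (j : ℤ) (u : M) :
    ℤ → M :=
  fun r => ρx s (j + r) u

/-- The `A`-cover `M̂`: the span of the `μ(x_s(j), u)`. -/
noncomputable def Mhat (ρx : S → ℤ → Module.End ℂ M) : Submodule ℂ (ℤ → M) :=
  Submodule.span ℂ {h : ℤ → M | ∃ (s : S) (j : ℤ) (u : M), h = mu ρx s j u}

/-- Action of `d_i` on `Hom(A, M)`. -/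
noncomputable def Dhat (ρd : ℤ → Module.End ℂ M) (i : ℤ) :
    Module.End ℂ (ℤ → M) :=
  LinearMap.pi fun r : ℤ =>
    (ρd i).comp (LinearMap.proj r) - (r : ℂ) • LinearMap.proj (i + r)

/-- Action of `x_s(k)` on `Hom(A, M)`. -/
noncomputable def Xhat (ρx : S → ℤ → Module.End ℂ M) (s : S) (k : ℤ) :
    Module.End ℂ (ℤ → M) :=
  LinearMap.pi fun r : ℤ => (ρx s k).comp (LinearMap.proj r)

/-- Action of `t^k` on `Hom(A, M)`. -/
noncomputable def Ahat (k : ℤ) : Module.End ℂ (ℤ → M) :=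
  LinearMap.pi fun r : ℤ => LinearMap.proj (r + k)

/-- Evaluation at `t^0 = 1`, i.e. `π : μ(x,u) ↦ xu`. -/
noncomputable def pihat : (ℤ → M) →ₗ[ℂ] M := LinearMap.proj (0 : ℤ)

/-!
Every operator acts on `h : ℤ → M` value by value, up to a shift of the argument, so each
`𝔏̃`-relation reduces, at every `r`, to the corresponding relation in `M`; the relations therefore
hold on all of `Hom(A, M)`. Stability of `M̂` only has to be checked on the spanning vectors
`μ(x, u)`, where it is the formula for the action, and `π (μ(x, u)) = x u` identifies `π(M̂)` with `IM`.
-/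

lemma Module.End.lie_apply_eq_sub {R N : Type*} [CommRing R] [AddCommGroup N] [Module R N]
    (f g : Module.End R N) (v : N) : ⁅f, g⁆ v = f (g v) - g (f v) := by
  rw [Ring.lie_def, LinearMap.sub_apply, Module.End.mul_apply, Module.End.mul_apply]

section Acover

variable {β : S → ℂ} {c : S → S → (S →₀ ℂ)}
  (ρd : ℤ → Module.End ℂ M) (ρx : S → ℤ → Module.End ℂ M)

@[simp]
lemma Dhat_apply (i : ℤ) (h : ℤ → M) (r : ℤ) :
    Dhat ρd i h r = ρd i (h r) - (r : ℂ) • h (i + r) := by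
  simp [Dhat]

@[simp]
lemma Xhat_apply (s : S) (k : ℤ) (h : ℤ → M) (r : ℤ) :
    Xhat ρx s k h r = ρx s k (h r) := by
  simp [Xhat]

@[simp]
lemma Ahat_apply (k : ℤ) (h : ℤ → M) (r : ℤ) : Ahat k h r = h (r + k) := by
  simp [Ahat]

@[simp]
lemma mu_apply (s : S) (j : ℤ) (u : M) (r : ℤ) : mu ρx s j u r = ρx s (j + r) u := rfl

@[simp]
lemma pihat_apply (h : ℤ → M) : pihat h = h 0 := rfl

lemma Dhat_mu
    (hdx : ∀ (i : ℤ) (s : S) (k : ℤ),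
      ⁅ρd i, ρx s k⁆ = ((k : ℂ) + (i : ℂ) * β s) • ρx s (i + k))
    (i : ℤ) (s : S) (j : ℤ) (u : M) :
    Dhat ρd i (mu ρx s j u) =
      ((j : ℂ) + (i : ℂ) * β s) • mu ρx s (i + j) u + mu ρx s j (ρd i u) := by
  funext r
  have hr := LinearMap.congr_fun (hdx i s (j + r)) u
  rw [Module.End.lie_apply_eq_sub, LinearMap.smul_apply] at hr
  simp only [Dhat_apply, mu_apply, Pi.add_apply, Pi.smul_apply]
  rw [show j + (i + r) = i + (j + r) by ring, show i + j + r = i + (j + r) by ring]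
  push_cast at hr
  linear_combination (norm := module) hr

lemma Xhat_mu
    (hxx : ∀ (s p : S) (j k : ℤ),
      ⁅ρx s j, ρx p k⁆ = ((c s p).sum fun q a => a • ρx q (j + k) : Module.End ℂ M))
    (s p : S) (k j : ℤ) (u : M) :
    Xhat ρx s k (mu ρx p j u) =
      ((c s p).sum fun q a => a • mu ρx q (k + j) u) + mu ρx p j (ρx s k u) := by
  funext r
  have hr := LinearMap.congr_fun (hxx s p k (j + r)) u
  rw [Module.End.lie_apply_eq_sub, sub_eq_iff_eq_add, LinearMap.finsupp_sum_apply] at hr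
  simpa [Finsupp.sum, Finset.sum_apply, add_assoc] using hr

lemma Ahat_mu (k : ℤ) (s : S) (j : ℤ) (u : M) : Ahat k (mu ρx s j u) = mu ρx s (j + k) u := by
  funext r
  simp only [Ahat_apply, mu_apply]
  ring_nf

lemma Ahat_Ahat (k l : ℤ) (h : ℤ → M) : Ahat k (Ahat l h) = Ahat (k + l) h := by
  funext r
  simp only [Ahat_apply]
  ring_nf

lemma Ahat_zero (h : ℤ → M) : Ahat 0 h = h := by
  funext r
  simp

lemma mu_mem_Mhat (s : S) (j : ℤ) (u : M) : mu ρx s j u ∈ Mhat ρx :=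
  Submodule.subset_span ⟨s, j, u, rfl⟩

lemma mem_Mhat_of_mu_mem {L : Module.End ℂ (ℤ → M)}
    (hL : ∀ (s : S) (j : ℤ) (u : M), L (mu ρx s j u) ∈ Mhat ρx) {h : ℤ → M} (hh : h ∈ Mhat ρx) :
    L h ∈ Mhat ρx := by
  have hle : Mhat ρx ≤ (Mhat ρx).comap L := by
    rw [Mhat, Submodule.span_le]
    rintro g ⟨s, j, u, rfl⟩
    exact hL s j u
  exact hle hh

lemma Dhat_mem_Mhat
    (hdx : ∀ (i : ℤ) (s : S) (k : ℤ),
      ⁅ρd i, ρx s k⁆ = ((k : ℂ) + (i : ℂ) * β s) • ρx s (i + k))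
    {h : ℤ → M} (hh : h ∈ Mhat ρx) (i : ℤ) : Dhat ρd i h ∈ Mhat ρx := by
  refine mem_Mhat_of_mu_mem ρx (fun s j u => ?_) hh
  rw [Dhat_mu ρd ρx hdx]
  exact add_mem (Submodule.smul_mem _ _ (mu_mem_Mhat ρx _ _ _)) (mu_mem_Mhat ρx _ _ _)

lemma Xhat_mem_Mhat
    (hxx : ∀ (s p : S) (j k : ℤ),
      ⁅ρx s j, ρx p k⁆ = ((c s p).sum fun q a => a • ρx q (j + k) : Module.End ℂ M))
    {h : ℤ → M} (hh : h ∈ Mhat ρx) (s : S) (k : ℤ) : Xhat ρx s k h ∈ Mhat ρx := by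
  refine mem_Mhat_of_mu_mem ρx (fun p j u => ?_) hh
  rw [Xhat_mu ρx hxx]
  refine add_mem (Submodule.sum_mem _ fun q _ => ?_) (mu_mem_Mhat ρx _ _ _)
  exact Submodule.smul_mem _ _ (mu_mem_Mhat ρx _ _ _)

lemma Ahat_mem_Mhat {h : ℤ → M} (hh : h ∈ Mhat ρx) (k : ℤ) : Ahat k h ∈ Mhat ρx := by
  refine mem_Mhat_of_mu_mem ρx (fun s j u => ?_) hh
  rw [Ahat_mu]
  exact mu_mem_Mhat ρx _ _ _

lemma lie_Dhat_Dhat (hdd : ∀ i j : ℤ, ⁅ρd i, ρd j⁆ = ((j : ℂ) - (i : ℂ)) • ρd (i + j))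
    (i j : ℤ) : ⁅Dhat ρd i, Dhat ρd j⁆ = ((j : ℂ) - (i : ℂ)) • Dhat ρd (i + j) := by
  ext h r
  have hr := LinearMap.congr_fun (hdd i j) (h r)
  rw [Module.End.lie_apply_eq_sub, LinearMap.smul_apply] at hr
  simp only [Module.End.lie_apply_eq_sub, LinearMap.smul_apply, Pi.sub_apply, Pi.smul_apply,
    Dhat_apply, map_sub, map_smul]
  rw [show j + (i + r) = i + (j + r) by ring, show i + j + r = i + (j + r) by ring]
  push_cast
  linear_combination (norm := module) hr

lemma lie_Dhat_Xhat
    (hdx : ∀ (i : ℤ) (s : S) (k : ℤ),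
      ⁅ρd i, ρx s k⁆ = ((k : ℂ) + (i : ℂ) * β s) • ρx s (i + k))
    (i : ℤ) (s : S) (k : ℤ) :
    ⁅Dhat ρd i, Xhat ρx s k⁆ = ((k : ℂ) + (i : ℂ) * β s) • Xhat ρx s (i + k) := by
  ext h r
  have hr := LinearMap.congr_fun (hdx i s k) (h r)
  rw [Module.End.lie_apply_eq_sub, LinearMap.smul_apply] at hr
  simp only [Module.End.lie_apply_eq_sub, LinearMap.smul_apply, Pi.sub_apply, Pi.smul_apply,
    Dhat_apply, Xhat_apply, map_sub, map_smul]
  linear_combination (norm := module) hr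

lemma lie_Xhat_Xhat
    (hxx : ∀ (s p : S) (j k : ℤ),
      ⁅ρx s j, ρx p k⁆ = ((c s p).sum fun q a => a • ρx q (j + k) : Module.End ℂ M))
    (s p : S) (j k : ℤ) :
    ⁅Xhat ρx s j, Xhat ρx p k⁆ =
      ((c s p).sum fun q a => a • Xhat ρx q (j + k) : Module.End ℂ (ℤ → M)) := by
  ext h r
  have hr := LinearMap.congr_fun (hxx s p j k) (h r)
  rw [Module.End.lie_apply_eq_sub] at hr
  simpa [Module.End.lie_apply_eq_sub, Finsupp.sum, LinearMap.sum_apply, Finset.sum_apply] using hr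

lemma lie_Dhat_Ahat (i k : ℤ) :
    ⁅Dhat ρd i, Ahat k⁆ = ((k : ℂ) • Ahat (i + k) : Module.End ℂ (ℤ → M)) := by
  ext h r
  simp only [Module.End.lie_apply_eq_sub, LinearMap.smul_apply, Pi.sub_apply, Pi.smul_apply,
    Dhat_apply, Ahat_apply]
  rw [show i + (r + k) = r + (i + k) by ring, show i + r + k = r + (i + k) by ring]
  push_cast
  module

lemma lie_Xhat_Ahat (s : S) (j k : ℤ) : ⁅Xhat ρx s j, Ahat k⁆ = (0 : Module.End ℂ (ℤ → M)) := by
  ext h r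
  simp [Module.End.lie_apply_eq_sub]

lemma pihat_Dhat (i : ℤ) (h : ℤ → M) : pihat (Dhat ρd i h) = ρd i (pihat h) := by
  simp

lemma pihat_Xhat (s : S) (k : ℤ) (h : ℤ → M) : pihat (Xhat ρx s k h) = ρx s k (pihat h) := by
  simp

lemma map_pihat_Mhat :
    (Mhat ρx).map pihat = Submodule.span ℂ {m : M | ∃ (s : S) (j : ℤ) (u : M), m = ρx s j u} := by
  rw [Mhat, Submodule.map_span]
  congr 1
  ext m
  constructor
  · rintro ⟨g, ⟨s, j, u, rfl⟩, rfl⟩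
    exact ⟨s, j, u, by simp⟩
  · rintro ⟨s, j, u, rfl⟩
    exact ⟨mu ρx s j u, ⟨s, j, u, rfl⟩, by simp⟩

end Acover


theorem Acover_module_structure_general (β : S → ℂ) (c : S → S → (S →₀ ℂ))
    (ρd : ℤ → Module.End ℂ M) (ρx : S → ℤ → Module.End ℂ M)
    -- M is an 𝔏-module:
    (hdd : ∀ i j : ℤ, ⁅ρd i, ρd j⁆ = ((j : ℂ) - (i : ℂ)) • ρd (i + j))
    (hdx : ∀ (i : ℤ) (s : S) (k : ℤ),
      ⁅ρd i, ρx s k⁆ = ((k : ℂ) + (i : ℂ) * β s) • ρx s (i + k))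
    (hxx : ∀ (s p : S) (j k : ℤ),
      ⁅ρx s j, ρx p k⁆ = ((c s p).sum fun q a => a • ρx q (j + k) : Module.End ℂ M)) :
    -- M̂ is stable under the actions:
    (∀ h ∈ Mhat ρx, ∀ i : ℤ, Dhat ρd i h ∈ Mhat ρx) ∧
    (∀ h ∈ Mhat ρx, ∀ (s : S) (k : ℤ), Xhat ρx s k h ∈ Mhat ρx) ∧
    (∀ h ∈ Mhat ρx, ∀ k : ℤ, Ahat k h ∈ Mhat ρx) ∧
    -- the defining formulas for the action on μ(x,u) hold:
    (∀ (i : ℤ) (s : S) (j : ℤ) (u : M),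
      Dhat ρd i (mu ρx s j u) =
        ((j : ℂ) + (i : ℂ) * β s) • mu ρx s (i + j) u + mu ρx s j (ρd i u)) ∧
    (∀ (s p : S) (k j : ℤ) (u : M),
      Xhat ρx s k (mu ρx p j u) =
        ((c s p).sum fun q a => a • mu ρx q (k + j) u) + mu ρx p j (ρx s k u)) ∧
    (∀ (k : ℤ) (s : S) (j : ℤ) (u : M),
      Ahat k (mu ρx s j u) = mu ρx s (j + k) u) ∧
    -- A acts associatively and unitally, and the 𝔏̃-relations hold on M̂:
    (∀ (h : ℤ → M) (k l : ℤ), Ahat k (Ahat l h) = Ahat (k + l) h) ∧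
    (∀ h : ℤ → M, Ahat 0 h = h) ∧
    (∀ h ∈ Mhat ρx, ∀ i j : ℤ,
      ⁅Dhat ρd i, Dhat ρd j⁆ h = (((j : ℂ) - (i : ℂ)) • Dhat ρd (i + j)) h) ∧
    (∀ h ∈ Mhat ρx, ∀ (i : ℤ) (s : S) (k : ℤ),
      ⁅Dhat ρd i, Xhat ρx s k⁆ h =
        (((k : ℂ) + (i : ℂ) * β s) • Xhat ρx s (i + k)) h) ∧
    (∀ h ∈ Mhat ρx, ∀ (s p : S) (j k : ℤ),
      ⁅Xhat ρx s j, Xhat ρx p k⁆ h =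
        ((c s p).sum fun q a => a • Xhat ρx q (j + k) : Module.End ℂ (ℤ → M)) h) ∧
    (∀ h ∈ Mhat ρx, ∀ i k : ℤ,
      ⁅Dhat ρd i, Ahat k⁆ h = ((k : ℂ) • Ahat (i + k) : Module.End ℂ (ℤ → M)) h) ∧
    (∀ h ∈ Mhat ρx, ∀ (s : S) (j k : ℤ), ⁅Xhat ρx s j, Ahat k⁆ h = 0) ∧
    -- π is an 𝔏-module homomorphism onto IM:
    (∀ h ∈ Mhat ρx, ∀ i : ℤ, pihat (Dhat ρd i h) = ρd i (pihat h)) ∧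
    (∀ h ∈ Mhat ρx, ∀ (s : S) (k : ℤ), pihat (Xhat ρx s k h) = ρx s k (pihat h)) ∧
    Submodule.map (pihat (M := M)) (Mhat ρx) =
      Submodule.span ℂ {m : M | ∃ (s : S) (j : ℤ) (u : M), m = ρx s j u} :=
  ⟨fun _ hh i => Dhat_mem_Mhat ρd ρx hdx hh i,
    fun _ hh s k => Xhat_mem_Mhat ρx hxx hh s k,
    fun _ hh k => Ahat_mem_Mhat ρx hh k,
    Dhat_mu ρd ρx hdx, Xhat_mu ρx hxx, Ahat_mu ρx,
    fun h k l => Ahat_Ahat k l h, Ahat_zero,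
    fun h _ i j => by rw [lie_Dhat_Dhat ρd hdd],
    fun h _ i s k => by rw [lie_Dhat_Xhat ρd ρx hdx],
    fun h _ s p j k => by rw [lie_Xhat_Xhat ρx hxx],
    fun h _ i k => by rw [lie_Dhat_Ahat ρd],
    fun h _ s j k => by rw [lie_Xhat_Ahat ρx, LinearMap.zero_apply],
    fun h _ i => pihat_Dhat ρd i h,
    fun h _ s k => pihat_Xhat ρx s k h,
    map_pihat_Mhat ρx⟩

theorem Acover_module_structure (β : S → ℂ) (c : S → S → (S →₀ ℂ))
    (ρd : ℤ → Module.End ℂ M) (ρx : S → ℤ → Module.End ℂ M)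
    -- M is an 𝔏-module:
    (hdd : ∀ i j : ℤ, ⁅ρd i, ρd j⁆ = ((j : ℂ) - (i : ℂ)) • ρd (i + j))
    (hdx : ∀ (i : ℤ) (s : S) (k : ℤ),
      ⁅ρd i, ρx s k⁆ = ((k : ℂ) + (i : ℂ) * β s) • ρx s (i + k))
    (hxx : ∀ (s p : S) (j k : ℤ),
      ⁅ρx s j, ρx p k⁆ = ((c s p).sum fun q a => a • ρx q (j + k) : Module.End ℂ M))
    -- IM ≠ 0:
    (hIM : Submodule.span ℂ {m : M | ∃ (s : S) (j : ℤ) (u : M), m = ρx s j u} ≠ ⊥) :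
    -- M̂ is stable under the actions:
    (∀ h ∈ Mhat ρx, ∀ i : ℤ, Dhat ρd i h ∈ Mhat ρx) ∧
    (∀ h ∈ Mhat ρx, ∀ (s : S) (k : ℤ), Xhat ρx s k h ∈ Mhat ρx) ∧
    (∀ h ∈ Mhat ρx, ∀ k : ℤ, Ahat k h ∈ Mhat ρx) ∧
    -- the defining formulas for the action on μ(x,u) hold:
    (∀ (i : ℤ) (s : S) (j : ℤ) (u : M),
      Dhat ρd i (mu ρx s j u) =
        ((j : ℂ) + (i : ℂ) * β s) • mu ρx s (i + j) u + mu ρx s j (ρd i u)) ∧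
    (∀ (s p : S) (k j : ℤ) (u : M),
      Xhat ρx s k (mu ρx p j u) =
        ((c s p).sum fun q a => a • mu ρx q (k + j) u) + mu ρx p j (ρx s k u)) ∧
    (∀ (k : ℤ) (s : S) (j : ℤ) (u : M),
      Ahat k (mu ρx s j u) = mu ρx s (j + k) u) ∧
    -- A acts associatively and unitally, and the 𝔏̃-relations hold on M̂:
    (∀ (h : ℤ → M) (k l : ℤ), Ahat k (Ahat l h) = Ahat (k + l) h) ∧
    (∀ h : ℤ → M, Ahat 0 h = h) ∧
    (∀ h ∈ Mhat ρx, ∀ i j : ℤ,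
      ⁅Dhat ρd i, Dhat ρd j⁆ h = (((j : ℂ) - (i : ℂ)) • Dhat ρd (i + j)) h) ∧
    (∀ h ∈ Mhat ρx, ∀ (i : ℤ) (s : S) (k : ℤ),
      ⁅Dhat ρd i, Xhat ρx s k⁆ h =
        (((k : ℂ) + (i : ℂ) * β s) • Xhat ρx s (i + k)) h) ∧
    (∀ h ∈ Mhat ρx, ∀ (s p : S) (j k : ℤ),
      ⁅Xhat ρx s j, Xhat ρx p k⁆ h =
        ((c s p).sum fun q a => a • Xhat ρx q (j + k) : Module.End ℂ (ℤ → M)) h) ∧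
    (∀ h ∈ Mhat ρx, ∀ i k : ℤ,
      ⁅Dhat ρd i, Ahat k⁆ h = ((k : ℂ) • Ahat (i + k) : Module.End ℂ (ℤ → M)) h) ∧
    (∀ h ∈ Mhat ρx, ∀ (s : S) (j k : ℤ), ⁅Xhat ρx s j, Ahat k⁆ h = 0) ∧
    -- π is an 𝔏-module homomorphism onto IM:
    (∀ h ∈ Mhat ρx, ∀ i : ℤ, pihat (Dhat ρd i h) = ρd i (pihat h)) ∧
    (∀ h ∈ Mhat ρx, ∀ (s : S) (k : ℤ), pihat (Xhat ρx s k h) = ρx s k (pihat h)) ∧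
    Submodule.map (pihat (M := M)) (Mhat ρx) =
      Submodule.span ℂ {m : M | ∃ (s : S) (j : ℤ) (u : M), m = ρx s j u} :=
  Acover_module_structure_general β c ρd ρx hdd hdx hxx
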